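/- arXiv:1604.08326 — 6 statements merged into one kernel-verified Lean document; each statement's English description precedes it below -/
import Mathlib

section
/- If G is a tree on n ≥ 2 vertices, then the sum over all edges (u,v) of min(deg(u), deg(v)) is at most 2n − 4 when n ≥ 3 (more precisely, it equals at most 2(n−1) − Δ where Δ is the maximum degree). -/
/-!
Root the tree at a vertex `r` of maximum degree. Every edge joins a vertex `w ≠ r` to the
penultimate vertex of the path from `r` to `w`, so the edges are covered by the "parent edges"
of the `n - 1` non-root vertices, and the weight of the parent edge of `w` is at most `deg w`.
Hence the sum is at most `∑_{w ≠ r} deg w = 2(n - 1) - Δ`. For `n ≥ 3` the degree sum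
`2(n - 1)` exceeds `n`, so `Δ ≥ 2`.
-/

open Finset

noncomputable def minDeg {V : Type*} [Fintype V] [DecidableEq V]
    (G : SimpleGraph V) [DecidableRel G.Adj] (e : Sym2 V) : ℕ :=
  Sym2.lift ⟨fun u v => min (G.degree u) (G.degree v), fun u v => min_comm _ _⟩ e

namespace SimpleGraph

variable {V : Type*} {G : SimpleGraph V}

theorem IsAcyclic.eq_penultimate_or_eq_penultimate (hG : G.IsAcyclic) {r x y : V}
    {p : G.Walk r x} {q : G.Walk r y} (hp : p.IsPath) (hq : q.IsPath) (hxy : G.Adj x y) :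
    x = q.penultimate ∨ y = p.penultimate := by
  by_cases hx : x ∈ q.support
  · exact .inl (hG.eq_penultimate_of_adj_end hq hxy.symm hx)
  · exact .inr (hG.eq_penultimate_of_adj_end hp hxy
      (hG.mem_support_of_ne_mem_support_of_adj_of_isPath hp hq hxy hx))

section Finite

variable [Fintype V] [DecidableRel G.Adj]

theorem IsTree.two_le_maxDegree (hG : G.IsTree) (hV : 3 ≤ Fintype.card V) :
    2 ≤ G.maxDegree := by
  by_contra! hΔ
  have hsum : ∑ v, G.degree v ≤ ∑ _v : V, 1 :=
    sum_le_sum fun v _ ↦ by have := G.degree_le_maxDegree v; omega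
  rw [sum_degrees_eq_twice_card_edges, sum_const, card_univ, smul_eq_mul, mul_one] at hsum
  have := hG.card_edgeFinset
  omega

variable [DecidableEq V]

theorem IsTree.edgeFinset_subset_image_penultimate (hG : G.IsTree) {r : V}
    (P : ∀ w, G.Walk r w) (hP : ∀ w, (P w).IsPath) :
    G.edgeFinset ⊆ (univ.erase r).image fun w ↦ s((P w).penultimate, w) := by
  have parent_edge_mem {x y : V} (hxy : G.Adj x y) (hx : x = (P y).penultimate) :
      s(x, y) ∈ (univ.erase r).image fun w ↦ s((P w).penultimate, w) := by
    refine mem_image.2 ⟨y, mem_erase.2 ⟨?_, mem_univ _⟩, by rw [hx]⟩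
    rintro rfl
    rw [Walk.eq_nil_iff_nil.2 (Walk.isPath_iff_nil.1 (hP _)), Walk.penultimate_nil] at hx
    exact hxy.ne hx
  intro e he
  induction e with
  | _ x y =>
    rw [mem_edgeFinset, mem_edgeSet] at he
    rcases hG.isAcyclic.eq_penultimate_or_eq_penultimate (hP x) (hP y) he with hx | hy
    · exact parent_edge_mem he hx
    · rw [Sym2.eq_swap]
      exact parent_edge_mem he.symm hy

theorem minDeg_mk_le_degree_right (u w : V) : minDeg G s(u, w) ≤ G.degree w :=
  min_le_right _ _

theorem IsTree.sum_minDeg_le_sum_degree_erase (hG : G.IsTree) (r : V) :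
    ∑ e ∈ G.edgeFinset, minDeg G e ≤ ∑ w ∈ univ.erase r, G.degree w := by
  choose P hP using hG.connected.preconnected.exists_isPath r
  calc ∑ e ∈ G.edgeFinset, minDeg G e
      ≤ ∑ e ∈ (univ.erase r).image (fun w ↦ s((P w).penultimate, w)), minDeg G e :=
        sum_le_sum_of_subset (hG.edgeFinset_subset_image_penultimate P hP)
    _ ≤ ∑ w ∈ univ.erase r, minDeg G s((P w).penultimate, w) :=
        sum_image_le_of_nonneg fun _ _ ↦ Nat.zero_le _
    _ ≤ ∑ w ∈ univ.erase r, G.degree w :=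
        sum_le_sum fun w _ ↦ minDeg_mk_le_degree_right _ w

theorem IsTree.sum_minDeg_add_maxDegree_le (hG : G.IsTree) :
    ∑ e ∈ G.edgeFinset, minDeg G e + G.maxDegree ≤ 2 * #G.edgeFinset := by
  have := hG.connected.nonempty
  obtain ⟨r, hr⟩ := G.exists_maximal_degree_vertex
  rw [hr, ← sum_degrees_eq_twice_card_edges, ← sum_erase_add _ _ (mem_univ r)]
  exact Nat.add_le_add_right (hG.sum_minDeg_le_sum_degree_erase r) _

end Finite

end SimpleGraph

theorem tree_sum_min_degree_le_general {V : Type*} [Fintype V] [DecidableEq V]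
    (G : SimpleGraph V) [DecidableRel G.Adj] (hG : G.IsTree)
    (n : ℕ) (hn : n = Fintype.card V) :
    (∑ e ∈ G.edgeFinset, (minDeg G e : ℤ)) ≤ 2 * ((n : ℤ) - 1) - (G.maxDegree : ℤ) ∧
    (3 ≤ n → (∑ e ∈ G.edgeFinset, (minDeg G e : ℤ)) ≤ 2 * (n : ℤ) - 4) := by
  subst hn
  have hsum := hG.sum_minDeg_add_maxDegree_le
  have hcard := hG.card_edgeFinset
  rw [← Nat.cast_sum]
  exact ⟨by omega, fun h3 ↦ by have := hG.two_le_maxDegree h3; omega⟩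

/-- If `G` is a tree on `n ≥ 2` vertices, then the sum over the edges of the minimum of the
endpoint degrees is at most `2(n-1) - Δ` where `Δ` is the maximum degree; in particular it is
at most `2n - 4` when `n ≥ 3`. -/
theorem tree_sum_min_degree_le {V : Type*} [Fintype V] [DecidableEq V]
    (G : SimpleGraph V) [DecidableRel G.Adj] (hG : G.IsTree)
    (n : ℕ) (hn : n = Fintype.card V) (h2 : 2 ≤ n) :
    (∑ e ∈ G.edgeFinset, (minDeg G e : ℤ)) ≤ 2 * ((n : ℤ) - 1) - (G.maxDegree : ℤ) ∧
    (3 ≤ n → (∑ e ∈ G.edgeFinset, (minDeg G e : ℤ)) ≤ 2 * (n : ℤ) - 4) :=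
  tree_sum_min_degree_le_general G hG n hn
end

section
/- For every simple graph G on n vertices, the sum over all edges (u,v) of 1/min(deg(u), deg(v)) is at most n − 1. -/
/-!
Order the vertices so that the degree is monotone and charge each edge to its smaller endpoint,
whose degree is then the minimum degree of the edge. A vertex `v` is charged once for each larger
neighbour, so at most `deg v` times and each time `1 / deg v`; the largest vertex is never charged.
-/

open Finset

theorem exists_linearOrder_monotone {V α : Type*} [LinearOrder α] (f : V → α) :
    ∃ _ : LinearOrder V, Monotone f := by
  classical
  let _ : LinearOrder V := linearOrderOfSTO WellOrderingRel
  exact ⟨LinearOrder.lift' (fun v => toLex (f v, v)) fun _ _ h => congrArg (fun p => (ofLex p).2) h,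
    fun _ _ huv => (Prod.Lex.le_iff.1 huv).elim le_of_lt fun h => h.1.le⟩

theorem Finset.sum_le_card_sub_one {ι : Type*} [Fintype ι] [DecidableEq ι] {f : ι → ℝ}
    (hf : ∀ i, f i ≤ 1) {i₀ : ι} (hi₀ : f i₀ ≤ 0) : ∑ i, f i ≤ Fintype.card ι - 1 := by
  rw [← add_sum_erase _ _ (mem_univ i₀)]
  have hrest := sum_le_card_nsmul (univ.erase i₀) f 1 fun i _ => hf i
  rw [card_erase_of_mem (mem_univ i₀), card_univ, nsmul_one,
    Nat.cast_sub (Fintype.card_pos_iff.2 ⟨i₀⟩), Nat.cast_one] at hrest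
  linarith

namespace SimpleGraph

variable {V : Type*} [LinearOrder V] {G : SimpleGraph V}

theorem adj_inf_sup {e : Sym2 V} (he : e ∈ G.edgeSet) : G.Adj e.inf e.sup := by
  induction e with | _ a b =>
  rcases le_total a b with h | h
  · simpa [h] using he
  · simpa [h] using G.adj_symm he

variable [Fintype V] [DecidableRel G.Adj]

theorem card_filter_lt_div_degree_le_one (v : V) :
    (#{w ∈ G.neighborFinset v | v < w} : ℝ) / G.degree v ≤ 1 := by
  refine div_le_one_of_le₀ ?_ (Nat.cast_nonneg _)
  rw [← card_neighborFinset_eq_degree]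
  exact_mod_cast card_filter_le _ _

variable [DecidableEq V]

theorem minDeg_eq_degree_inf (hG : Monotone fun v => G.degree v) (e : Sym2 V) :
    minDeg G e = G.degree e.inf := by
  induction e with | _ a b => exact hG.map_min.symm

theorem card_filter_inf_eq_le (v : V) :
    #{e ∈ G.edgeFinset | e.inf = v} ≤ #{w ∈ G.neighborFinset v | v < w} := by
  refine card_le_card_of_injOn Sym2.sup (fun e he => ?_) fun e₁ he₁ e₂ he₂ hsup => ?_
  · simp only [coe_filter, mem_edgeFinset] at he ⊢
    obtain ⟨hedge, rfl⟩ := he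
    have hadj := adj_inf_sup hedge
    exact ⟨(mem_neighborFinset _ _ _).2 hadj, e.inf_le_sup.lt_of_ne hadj.ne⟩
  · simp only [coe_filter] at he₁ he₂
    exact Sym2.inf_eq_inf_and_sup_eq_sup.1 ⟨he₁.2.trans he₂.2.symm, hsup⟩

theorem sum_inv_degree_inf_le [Nonempty V] :
    ∑ e ∈ G.edgeFinset, (1 : ℝ) / G.degree e.inf ≤ Fintype.card V - 1 := by
  obtain ⟨top, htop⟩ : ∃ top : V, ∀ v, v ≤ top := Finite.exists_max id
  calc ∑ e ∈ G.edgeFinset, (1 : ℝ) / G.degree e.inf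
      = ∑ v, (#{e ∈ G.edgeFinset | e.inf = v} : ℝ) / G.degree v := by
        rw [← sum_fiberwise G.edgeFinset Sym2.inf]
        refine sum_congr rfl fun v _ => ?_
        rw [sum_congr rfl fun e he => by rw [(mem_filter.1 he).2], sum_const, nsmul_eq_mul,
          mul_one_div]
    _ ≤ ∑ v, (#{w ∈ G.neighborFinset v | v < w} : ℝ) / G.degree v := by
        gcongr with v
        exact card_filter_inf_eq_le v
    _ ≤ Fintype.card V - 1 := by
        refine sum_le_card_sub_one card_filter_lt_div_degree_le_one (i₀ := top) ?_
        rw [filter_false_of_mem fun w _ => (htop w).not_gt, card_empty, Nat.cast_zero, zero_div]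

end SimpleGraph

/-- For every simple graph on `n ≥ 1` vertices, the sum over all edges `(u,v)` of
`1 / min(deg u, deg v)` is at most `n - 1`. -/
theorem sum_inv_min_degree_le {V : Type*} [Fintype V] [DecidableEq V] [Nonempty V]
    (G : SimpleGraph V) [DecidableRel G.Adj] (n : ℕ) (hn : n = Fintype.card V) :
    ∑ e ∈ G.edgeFinset, (1 : ℝ) / (minDeg G e : ℝ) ≤ (n : ℝ) - 1 := by
  obtain ⟨_, hmono⟩ := exists_linearOrder_monotone fun v => G.degree v
  simp_rw [G.minDeg_eq_degree_inf hmono, hn]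
  exact G.sum_inv_degree_inf_le
end

section
/- For a finite reversible Markov chain, for every sequence of states v_1, …, v_k, the sum of hitting times around the cycle forward equals the sum around the cycle backward: H[v_k,v_1] + ∑_{i=1}^{k−1} H[v_i,v_{i+1}] = H[v_1,v_k] + ∑_{i=2}^{k} H[v_i,v_{i−1}]. -/
/-!
Let `h_v = H(·, v)` and `L = I - P`. Off `v` the recursion says `L h_v = 1`; since `p` is
stationary, `∑ₓ p x (L h_v) x = 0`, which forces `p (L h_v) = p - δ_v` everywhere (Kac's formula).
Reversibility makes `L` self-adjoint for `⟨f, g⟩ = ∑ₓ p x f x g x`, so pairing `h_u` with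
`L h_v` both ways gives `H u v - H v u = ψ v - ψ u` with `ψ v = ∑ₓ p x H x v`. The antisymmetric
part of `H` is thus a gradient, and its sum around any closed walk telescopes to zero.
-/

open Finset

theorem Fin.sum_succ_sub_castSucc {M : Type*} [AddCommGroup M] (k : ℕ) (F : Fin (k + 1) → M) :
    ∑ i : Fin k, (F i.succ - F i.castSucc) = F (Fin.last k) - F 0 := by
  induction k with
  | zero => simp
  | succ n ih =>
    rw [Fin.sum_univ_castSucc]
    simp only [Fin.succ_castSucc, ih (fun i => F i.castSucc), Fin.succ_last]
    simp

theorem cycle_sum_eq_of_sub_eq {V M : Type*} [AddCommGroup M] {H : V → V → M} (φ : V → M)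
    (hφ : ∀ a b, H a b - H b a = φ b - φ a) (k : ℕ) (vs : Fin (k + 1) → V) :
    H (vs (Fin.last k)) (vs 0) + ∑ i : Fin k, H (vs i.castSucc) (vs i.succ)
      = H (vs 0) (vs (Fin.last k)) + ∑ i : Fin k, H (vs i.succ) (vs i.castSucc) := by
  have htele : ∑ i : Fin k, H (vs i.castSucc) (vs i.succ)
      - ∑ i : Fin k, H (vs i.succ) (vs i.castSucc) = φ (vs (Fin.last k)) - φ (vs 0) := by
    rw [← sum_sub_distrib, sum_congr rfl fun i _ => hφ _ _]
    exact Fin.sum_succ_sub_castSucc k (fun i => φ (vs i))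
  rw [← sub_eq_zero, add_sub_add_comm, hφ, htele]
  abel

namespace MarkovChain

variable {V : Type*} [Fintype V]

def laplacian (P : V → V → ℝ) (f : V → ℝ) (x : V) : ℝ :=
  f x - ∑ w, P x w * f w

theorem sum_mul_laplacian_eq_zero {P : V → V → ℝ} {p : V → ℝ}
    (hstat : ∀ v, ∑ u, p u * P u v = p v) (f : V → ℝ) :
    ∑ x, p x * laplacian P f x = 0 := by
  have hflow : ∑ x, p x * ∑ w, P x w * f w = ∑ w, p w * f w := by
    simp_rw [mul_sum, ← mul_assoc]
    rw [sum_comm]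
    simp_rw [← sum_mul, hstat]
  simp only [laplacian, mul_sub, sum_sub_distrib, hflow, sub_self]

theorem sum_mul_mul_laplacian (P : V → V → ℝ) (p f g : V → ℝ) :
    ∑ x, p x * f x * laplacian P g x
      = ∑ x, p x * f x * g x - ∑ x, ∑ w, p x * P x w * f x * g w := by
  simp only [laplacian, mul_sub, mul_sum, sum_sub_distrib]
  congr 1
  exact sum_congr rfl fun x _ => sum_congr rfl fun w _ => by ring

theorem sum_mul_mul_laplacian_comm {P : V → V → ℝ} {p : V → ℝ}
    (hrev : ∀ u v, p u * P u v = p v * P v u) (f g : V → ℝ) :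
    ∑ x, p x * f x * laplacian P g x = ∑ x, p x * g x * laplacian P f x := by
  rw [sum_mul_mul_laplacian, sum_mul_mul_laplacian, sum_comm (f := fun x w => _ * g w)]
  congr 1
  · exact sum_congr rfl fun x _ => by ring
  · refine sum_congr rfl fun w _ => sum_congr rfl fun x _ => ?_
    rw [hrev x w]
    ring

theorem mul_laplacian_hittingTime [DecidableEq V] {P : V → V → ℝ} {p : V → ℝ}
    (hpsum : ∑ v, p v = 1) (hstat : ∀ v, ∑ u, p u * P u v = p v) {H : V → V → ℝ}
    (hH : ∀ u v, u ≠ v → H u v = 1 + ∑ w, P u w * H w v) (v x : V) :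
    p x * laplacian P (H · v) x = p x - if x = v then 1 else 0 := by
  have off_diag : ∀ u ≠ v, p u * laplacian P (H · v) u = p u := fun u hu => by
    rw [laplacian, hH u v hu]
    ring
  by_cases hx : x = v
  · subst hx
    have htotal := sum_mul_laplacian_eq_zero hstat (H · x)
    rw [← add_sum_erase _ _ (mem_univ x),
      sum_congr rfl fun u hu => off_diag u (ne_of_mem_erase hu),
      sum_erase_eq_sub (mem_univ x), hpsum] at htotal
    rw [if_pos rfl]
    linarith
  · rw [off_diag x hx, if_neg hx, sub_zero]

theorem hittingTime_sub_hittingTime {P : V → V → ℝ} {p : V → ℝ}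
    (hpsum : ∑ v, p v = 1) (hstat : ∀ v, ∑ u, p u * P u v = p v)
    (hrev : ∀ u v, p u * P u v = p v * P v u) {H : V → V → ℝ}
    (hH : ∀ u v, u ≠ v → H u v = 1 + ∑ w, P u w * H w v) (u v : V) :
    H u v - H v u = ∑ x, p x * H x v - ∑ x, p x * H x u := by
  classical
  have pairing (a b : V) :
      ∑ x, p x * H x a * laplacian P (H · b) x = ∑ x, p x * H x a - H b a := by
    simp_rw [mul_right_comm _ (H _ a), mul_laplacian_hittingTime hpsum hstat hH]
    simp only [sub_mul, ite_mul, one_mul, zero_mul, sum_sub_distrib, sum_ite_eq', mem_univ,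
      if_true]
  have hsymm := sum_mul_mul_laplacian_comm hrev (H · u) (H · v)
  rw [pairing, pairing] at hsymm
  linarith

end MarkovChain

theorem reversible_cycle_identity_general {V : Type*} [Fintype V]
    (P : V → V → ℝ)
    (p : V → ℝ) (hpsum : ∑ v, p v = 1)
    (hstat : ∀ v, ∑ u, p u * P u v = p v)
    (hrev : ∀ u v, p u * P u v = p v * P v u)
    (H : V → V → ℝ)
    (hH : ∀ u v, u ≠ v → H u v = 1 + ∑ w, P u w * H w v)
    (k : ℕ) (vs : Fin (k + 1) → V) :
    H (vs (Fin.last k)) (vs 0) + ∑ i : Fin k, H (vs i.castSucc) (vs i.succ)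
      = H (vs 0) (vs (Fin.last k)) + ∑ i : Fin k, H (vs i.succ) (vs i.castSucc) :=
  cycle_sum_eq_of_sub_eq (fun v => ∑ x, p x * H x v)
    (MarkovChain.hittingTime_sub_hittingTime hpsum hstat hrev hH) k vs

/-- Cycle-reversibility identity: for a finite irreducible reversible Markov chain, for every
sequence of states `v_0, …, v_k`, the sum of hitting times around the cycle forward equals the
sum around the cycle backward.  Here `H` is the expected-hitting-time function of the chain,
characterized by `H v v = 0` and `H u v = 1 + ∑ w, P u w * H w v` for `u ≠ v`, and
reversibility means `p u * P u v = p v * P v u` for the stationary distribution `p`. -/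
theorem reversible_cycle_identity {V : Type*} [Fintype V]
    (P : V → V → ℝ)
    (hP0 : ∀ u v, 0 ≤ P u v) (hP1 : ∀ u, ∑ v, P u v = 1)
    (hirr : ∀ u v, Relation.ReflTransGen (fun a b => 0 < P a b) u v)
    (p : V → ℝ) (hppos : ∀ v, 0 < p v) (hpsum : ∑ v, p v = 1)
    (hstat : ∀ v, ∑ u, p u * P u v = p v)
    (hrev : ∀ u v, p u * P u v = p v * P v u)
    (H : V → V → ℝ) (hH0 : ∀ v, H v v = 0)
    (hH : ∀ u v, u ≠ v → H u v = 1 + ∑ w, P u w * H w v)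
    (k : ℕ) (vs : Fin (k + 1) → V) :
    H (vs (Fin.last k)) (vs 0) + ∑ i : Fin k, H (vs i.castSucc) (vs i.succ)
      = H (vs 0) (vs (Fin.last k)) + ∑ i : Fin k, H (vs i.succ) (vs i.castSucc) :=
  reversible_cycle_identity_general P p hpsum hstat hrev H hH k vs
end

section
/- If G is a tree on n vertices equipped with the resistance r(u,v) = min(deg(u),deg(v)), then the cyclic cover time of the associated random walk is at most 4n². -/
open Finset

/-- The minimum-degree conductance function: `c(u,v) = 1 / min(deg u, deg v)` on edges,
`0` on non-edges. -/
noncomputable def cMin {V : Type*} [Fintype V] [DecidableEq V]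
    (G : SimpleGraph V) [DecidableRel G.Adj] (u v : V) : ℝ :=
  if G.Adj u v then 1 / (min (G.degree u) (G.degree v) : ℝ) else 0

/-- The sum of hitting times `H` along the cyclic ordering of the vertices given by `σ`;
the cyclic cover time is the minimum of this quantity over all `σ`. -/
noncomputable def cycSum {V : Type*} [Fintype V] (H : V → V → ℝ)
    (σ : Fin (Fintype.card V) ≃ V) : ℝ :=
  ∑ i, H (σ i) (σ ⟨(i.val + 1) % Fintype.card V, Nat.mod_lt _ i.pos⟩)

/-!
Hitting times `H` of the walk satisfy the triangle inequality: `y ↦ H y b + H b c - H y c` is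
harmonic off `{b, c}` and nonnegative on `{b, c}`, so the minimum principle applies. Summing the
first-step equations, weighted by the conductance at each vertex, over one side of an edge `uv`
of the tree gives the commute time identity `H u v + H v u = K / c(u,v) = K · min(deg u, deg v)`,
where `K = ∑ c ≤ ∑ deg = 2(n - 1)`. Build a tour by inserting the vertices one at a time, each
next to a tree neighbour `p` already on it: by the triangle inequality inserting `x` costs at
most `H x p + H p x ≤ K · deg x`, so the whole tour costs at most `K · ∑ deg ≤ 4(n - 1)²`.
-/

section RandomWalk

variable {V : Type*} [Fintype V]

noncomputable def walkMatrix (c : V → V → ℝ) (u w : V) : ℝ := c u w / ∑ x, c u x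

theorem mul_walkMatrix {c : V → V → ℝ} (hc : ∀ x y, 0 ≤ c x y) (x y : V) :
    (∑ z, c x z) * walkMatrix c x y = c x y := by
  by_cases h : ∑ z, c x z = 0
  · rw [h, zero_mul, (sum_eq_zero_iff_of_nonneg fun z _ => hc x z).1 h y (mem_univ y)]
  · exact mul_div_cancel₀ _ h

/-- The first-step equations determining the expected time `H u v` for the chain `P` started
at `u` to reach `v`. -/
structure IsHittingTime (P H : V → V → ℝ) : Prop where
  self : ∀ v, H v v = 0
  eq_one_add : ∀ u v, u ≠ v → H u v = 1 + ∑ w, P u w * H w v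

end RandomWalk

namespace SimpleGraph

variable {V : Type*} {G : SimpleGraph V}

theorem Reachable.mem_of_forall_adj {S : Set V} (hS : ∀ x y, G.Adj x y → x ∈ S → y ∈ S)
    {x y : V} (hx : x ∈ S) (h : G.Reachable x y) : y ∈ S := by
  rw [reachable_iff_reflTransGen] at h
  induction h with
  | refl => exact hx
  | tail _ hadj ih => exact hS _ _ hadj ih

theorem Preconnected.le_of_superharmonic [Fintype V] (hG : G.Preconnected) {P : V → V → ℝ}
    (hP : ∀ x y, 0 ≤ P x y) (hPG : ∀ x y, G.Adj x y → 0 < P x y) {B : Set V} (hB : B.Nonempty)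
    (hrow : ∀ x ∉ B, ∑ y, P x y = 1) {f : V → ℝ} (hf : ∀ x ∉ B, ∑ y, P x y * f y ≤ f x)
    {m : ℝ} (hm : ∀ b ∈ B, m ≤ f b) (x : V) : m ≤ f x := by
  obtain ⟨x₀, -, hx₀⟩ := exists_min_image univ f ⟨x, mem_univ x⟩
  refine le_trans ?_ (hx₀ x (mem_univ x))
  by_contra! hlt
  have hnotB : ∀ y, f y = f x₀ → y ∉ B := fun y hy hyB => (hm y hyB).not_gt (hy ▸ hlt)
  have hclosed : ∀ y z, G.Adj y z → f y = f x₀ → f z = f x₀ := by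
    intro y z hyz hy
    have hterm : ∀ w ∈ univ, 0 ≤ P y w * (f w - f y) := fun w _ =>
      mul_nonneg (hP y w) (by linarith [hx₀ w (mem_univ w)])
    have hsum : ∑ w, P y w * (f w - f y) = 0 := by
      refine le_antisymm ?_ (sum_nonneg hterm)
      simp only [mul_sub, sum_sub_distrib, ← sum_mul, hrow y (hnotB y hy), one_mul]
      linarith [hf y (hnotB y hy)]
    rcases mul_eq_zero.1 ((sum_eq_zero_iff_of_nonneg hterm).1 hsum z (mem_univ z)) with h | h
    · exact absurd h (hPG y z hyz).ne'
    · linarith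
  obtain ⟨b, hb⟩ := hB
  exact hnotB b ((hG x₀ b).mem_of_forall_adj (S := {y | f y = f x₀}) hclosed rfl) hb

structure IsConductance (G : SimpleGraph V) (c : V → V → ℝ) : Prop where
  symm : ∀ x y, c x y = c y x
  nonneg : ∀ x y, 0 ≤ c x y
  pos_iff_adj : ∀ x y, 0 < c x y ↔ G.Adj x y

namespace IsConductance

variable {c : V → V → ℝ} (hc : G.IsConductance c)
include hc

theorem eq_zero_of_not_adj {x y : V} (h : ¬G.Adj x y) : c x y = 0 :=
  le_antisymm (not_lt.1 (mt (hc.pos_iff_adj x y).1 h)) (hc.nonneg x y)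

variable [Fintype V]

theorem sum_pos_of_adj {x y : V} (h : G.Adj x y) : 0 < ∑ z, c x z :=
  sum_pos' (fun z _ => hc.nonneg x z) ⟨y, mem_univ y, (hc.pos_iff_adj x y).2 h⟩

theorem walkMatrix_nonneg (x y : V) : 0 ≤ walkMatrix c x y :=
  div_nonneg (hc.nonneg x y) (sum_nonneg fun z _ => hc.nonneg x z)

theorem walkMatrix_pos {x y : V} (h : G.Adj x y) : 0 < walkMatrix c x y :=
  div_pos ((hc.pos_iff_adj x y).2 h) (hc.sum_pos_of_adj h)

theorem sum_walkMatrix_of_reachable {x y : V} (h : G.Reachable x y) (hxy : x ≠ y) :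
    ∑ w, walkMatrix c x w = 1 := by
  obtain ⟨z, hz⟩ := h.nonempty_neighborSet_left hxy
  simp only [walkMatrix, ← sum_div]
  exact div_self (hc.sum_pos_of_adj hz).ne'

end IsConductance

theorem Adj.min_degree_pos [Fintype V] [DecidableRel G.Adj] {x y : V} (h : G.Adj x y) :
    0 < min (G.degree x) (G.degree y) :=
  lt_min (G.degree_pos_iff_exists_adj x |>.2 ⟨y, h⟩)
    (G.degree_pos_iff_exists_adj y |>.2 ⟨x, h.symm⟩)

end SimpleGraph

namespace IsHittingTime

open SimpleGraph

variable {V : Type*} [Fintype V] {G : SimpleGraph V} {c H : V → V → ℝ}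
  (hH : IsHittingTime (walkMatrix c) H)
include hH

theorem nonneg (hG : G.Preconnected) (hc : G.IsConductance c) (u v : V) : 0 ≤ H u v := by
  refine hG.le_of_superharmonic (f := (H · v)) hc.walkMatrix_nonneg (fun _ _ => hc.walkMatrix_pos)
    (B := {v}) ⟨v, rfl⟩ (fun x hx => hc.sum_walkMatrix_of_reachable (hG x v) hx) (fun x hx => ?_)
    (fun b hb => by rw [Set.mem_singleton_iff.1 hb, hH.self]) u
  linarith [hH.eq_one_add x v hx]

theorem triangle (hG : G.Preconnected) (hc : G.IsConductance c) (x y z : V) :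
    H x z ≤ H x y + H y z := by
  suffices h : 0 ≤ H x y + H y z - H x z by linarith
  refine hG.le_of_superharmonic (f := fun w => H w y + H y z - H w z) hc.walkMatrix_nonneg
    (fun _ _ => hc.walkMatrix_pos) (B := {y, z}) ⟨y, Set.mem_insert y _⟩
    (fun w hw => hc.sum_walkMatrix_of_reachable (hG w y) fun h => hw (Or.inl h)) (fun w hw => ?_)
    ?_ x
  · simp only [Set.mem_insert_iff, Set.mem_singleton_iff, not_or] at hw
    have hrow := hc.sum_walkMatrix_of_reachable (hG w y) hw.1
    simp only [mul_sub, mul_add, sum_sub_distrib, sum_add_distrib, ← sum_mul, hrow, one_mul]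
    linarith [hH.eq_one_add w y hw.1, hH.eq_one_add w z hw.2]
  · rintro b (rfl | rfl)
    · simp [hH.self]
    · simpa [hH.self] using add_nonneg (hH.nonneg hG hc b y) (hH.nonneg hG hc y b)

/-- Multiply the first-step equation for `H x v` by the conductance `∑ y, c x y` at `x` and sum
over `x ∈ S`: by the symmetry of `c` all terms cancel except the flow `c u v * H u v` out of `S`. -/
theorem mul_eq_sum_of_cut [DecidableEq V] (hsymm : ∀ x y, c x y = c y x)
    (hnonneg : ∀ x y, 0 ≤ c x y) {S : Finset V} {u v : V} (hu : u ∈ S) (hv : v ∉ S)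
    (hcut : ∀ x ∈ S, ∀ y ∉ S, (x, y) ≠ (u, v) → c x y = 0) :
    c u v * H u v = ∑ x ∈ S, ∑ y, c x y := by
  have hrow : ∀ x ∈ S, (∑ y, c x y) * H x v = ∑ y, c x y + ∑ y, c x y * H y v := by
    intro x hx
    rw [hH.eq_one_add x v (ne_of_mem_of_not_mem hx hv), mul_add, mul_one, mul_sum]
    simp only [← mul_assoc, mul_walkMatrix hnonneg]
  have hsplit (g : V → V → ℝ) : ∑ x ∈ S, ∑ y, c x y * g x y =
      ∑ x ∈ S, ∑ y ∈ S, c x y * g x y + ∑ x ∈ S, ∑ y ∈ Sᶜ, c x y * g x y := by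
    rw [← sum_add_distrib]
    exact sum_congr rfl fun x _ => (sum_add_sum_compl S _).symm
  have hcross (g : V → V → ℝ) : ∑ x ∈ S, ∑ y ∈ Sᶜ, c x y * g x y = c u v * g u v := by
    rw [← sum_product', sum_eq_single_of_mem (u, v) (mem_product.2 ⟨hu, mem_compl.2 hv⟩)]
    rintro ⟨x, y⟩ hxy hne
    rw [mem_product, mem_compl] at hxy
    rw [hcut x hxy.1 y hxy.2 hne, zero_mul]
  have hswap : ∑ x ∈ S, ∑ y ∈ S, c x y * H x v = ∑ x ∈ S, ∑ y ∈ S, c x y * H y v := by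
    rw [sum_comm]
    exact sum_congr rfl fun x _ => sum_congr rfl fun y _ => by rw [hsymm]
  calc c u v * H u v
      = ∑ x ∈ S, ∑ y, c x y * H x v - ∑ x ∈ S, ∑ y, c x y * H y v := by
        rw [hsplit (fun x _ => H x v), hsplit (fun _ y => H y v), hswap, hcross, hcross, hH.self]
        ring
    _ = ∑ x ∈ S, ∑ y, c x y := by
        simp only [← sum_mul, ← sum_sub_distrib]
        exact sum_congr rfl fun x hx => by rw [hrow x hx]; ring

theorem mul_add_eq_of_isBridge (hc : G.IsConductance c) {u v : V} (hb : G.IsBridge s(u, v)) :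
    c u v * (H u v + H v u) = ∑ x, ∑ y, c x y := by
  classical
  set S : Finset V := {x | (G.deleteEdges {s(u, v)}).Reachable x u}
  have hv : v ∉ S := by simpa [S, isBridge_iff, reachable_comm] using hb
  have hcut : ∀ x ∈ S, ∀ y ∉ S, (x, y) ≠ (u, v) → c x y = 0 := by
    intro x hx y hy hne
    refine hc.eq_zero_of_not_adj fun hxy => hy ?_
    simp only [S, mem_filter, mem_univ, true_and] at hx ⊢
    refine (Adj.reachable ?_).symm.trans hx
    refine deleteEdges_adj.2 ⟨hxy, fun he => ?_⟩
    rcases Sym2.eq_iff.1 he with ⟨rfl, rfl⟩ | ⟨rfl, rfl⟩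
    · exact hne rfl
    · exact hv (by simpa [S] using hx)
  have hS := hH.mul_eq_sum_of_cut hc.symm hc.nonneg (u := u) (S := S) (by simp [S]) hv hcut
  have hSc := hH.mul_eq_sum_of_cut hc.symm hc.nonneg (u := v) (v := u) (S := Sᶜ) (mem_compl.2 hv)
    (by simp [S]) fun x hx y hy hne => by
      rw [hc.symm]
      exact hcut y (by simpa using hy) x (mem_compl.1 hx) fun h => hne (by simp_all)
  rw [mul_add, hS, hc.symm, hSc, sum_add_sum_compl]

end IsHittingTime

section MinDegree

open SimpleGraph

variable {V : Type*} [Fintype V] [DecidableEq V] (G : SimpleGraph V) [DecidableRel G.Adj]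

theorem isConductance_cMin : G.IsConductance (cMin G) where
  symm x y := by by_cases h : G.Adj x y <;> simp [cMin, h, G.adj_comm, min_comm]
  nonneg x y := by unfold cMin; split_ifs <;> positivity
  pos_iff_adj x y := by
    by_cases h : G.Adj x y
    · simpa [cMin, h] using h.min_degree_pos
    · simp [cMin, h]

theorem sum_cMin_le_degree (x : V) : ∑ y, cMin G x y ≤ G.degree x := by
  calc ∑ y, cMin G x y ≤ ∑ y, if G.Adj x y then (1 : ℝ) else 0 := by
        refine sum_le_sum fun y _ => ?_
        unfold cMin
        split_ifs with h
        · exact div_le_one_of_le₀ (by exact_mod_cast h.min_degree_pos) (by positivity)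
        · rfl
    _ = G.degree x := by
        simp [sum_boole, ← card_neighborFinset_eq_degree, neighborFinset_eq_filter]

theorem sum_sum_cMin_le : ∑ x, ∑ y, cMin G x y ≤ 2 * #G.edgeFinset := by
  calc ∑ x, ∑ y, cMin G x y ≤ ∑ x, (G.degree x : ℝ) := sum_le_sum fun x _ => sum_cMin_le_degree G x
    _ = 2 * #G.edgeFinset := by exact_mod_cast G.sum_degrees_eq_twice_card_edges

variable {G}

theorem SimpleGraph.IsTree.add_hittingTime_eq (hT : G.IsTree) {H : V → V → ℝ}
    (hH : IsHittingTime (walkMatrix (cMin G)) H) {x y : V} (h : G.Adj x y) :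
    H x y + H y x = min (G.degree x) (G.degree y) * ∑ u, ∑ w, cMin G u w := by
  have hxy := hH.mul_add_eq_of_isBridge (isConductance_cMin G)
    (isAcyclic_iff_forall_adj_isBridge.1 hT.isAcyclic h)
  have hm : (0 : ℝ) < min (G.degree x) (G.degree y) := by exact_mod_cast h.min_degree_pos
  push_cast at hm ⊢
  rw [cMin, if_pos h] at hxy
  field_simp at hxy
  linarith

end MinDegree

section Tours

variable {V : Type*} [DecidableEq V]

theorem List.Nodup.exists_perm_formPerm_eq_swap_mul {l : List V} (hl : l.Nodup) {p : V}
    (hp : p ∈ l) (x : V) :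
    ∃ l' : List V, l'.Perm (x :: l) ∧ l'.formPerm = Equiv.swap x p * l.formPerm := by
  obtain ⟨s, t, rfl⟩ := List.append_of_mem hp
  refine ⟨x :: p :: (t ++ s), (List.perm_append_comm (l₁ := p :: t) (l₂ := s)).cons x, ?_⟩
  rw [List.formPerm_cons_cons, ← List.formPerm_rotate _ hl s.length, List.rotate_append_length_eq]
  rfl

variable [Fintype V]

theorem List.Nodup.length_eq_card_iff {l : List V} (hl : l.Nodup) :
    l.length = Fintype.card V ↔ ∀ v, v ∈ l := by
  rw [← List.toFinset_card_of_nodup hl, card_eq_iff_eq_univ, eq_univ_iff_forall]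
  simp only [List.mem_toFinset]

/-- The cost of the tour in which `π` maps each vertex to the next one. -/
def permCost (H : V → V → ℝ) (π : Equiv.Perm V) : ℝ := ∑ v, H v (π v)

theorem exists_cycSum_eq_permCost (H : V → V → ℝ) {l : List V} (hl : l.Nodup)
    (hall : ∀ v, v ∈ l) : ∃ σ : Fin (Fintype.card V) ≃ V, cycSum H σ = permCost H l.formPerm := by
  have hlen := hl.length_eq_card_iff.2 hall
  let σ := (finCongr hlen.symm).trans (List.Nodup.getEquivOfForallMemList l hl hall)
  refine ⟨σ, ?_⟩
  rw [permCost, ← Equiv.sum_comp σ]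
  refine sum_congr rfl fun i _ => ?_
  simp [σ, List.formPerm_apply_getElem _ hl, hlen]

/-- `Equiv.swap x p * π` inserts the fixed point `x` of `π` into the tour just before `p`. -/
theorem permCost_swap_mul_le {H : V → V → ℝ} (htri : ∀ x y z, H x z ≤ H x y + H y z)
    {π : Equiv.Perm V} {x p : V} (hx : H x x = 0) (hπx : π x = x) (hxp : x ≠ p) :
    permCost H (Equiv.swap x p * π) ≤ permCost H π + (H x p + H p x) := by
  set q := π.symm p
  have hπq : π q = p := π.apply_symm_apply p
  have hqx : q ≠ x := fun h => hxp (by rw [← hπx, ← h, hπq])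
  have hdiff : permCost H (Equiv.swap x p * π) - permCost H π =
      (H q x - H q p) + (H x p - H x x) := by
    rw [permCost, permCost, ← sum_sub_distrib, Fintype.sum_eq_add q x hqx]
    · simp [hπq, hπx]
    · rintro w ⟨hwq, hwx⟩
      have hwp : π w ≠ p := fun h => hwq (π.injective (h.trans hπq.symm))
      have hwx' : π w ≠ x := fun h => hwx (π.injective (h.trans hπx.symm))
      simp [Equiv.swap_apply_of_ne_of_ne hwx' hwp]
  linarith [htri q p x]

variable {G : SimpleGraph V} {H : V → V → ℝ} {f : V → ℝ}

theorem SimpleGraph.Preconnected.exists_perm_cons_permCost_le (hG : G.Preconnected)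
    (hH0 : ∀ v, H v v = 0) (htri : ∀ x y z, H x z ≤ H x y + H y z)
    (hf : ∀ x y, G.Adj x y → H x y + H y x ≤ f x) {l : List V} (hl : l.Nodup) {r y : V}
    (hr : r ∈ l) (hy : y ∉ l) :
    ∃ x ∉ l, ∃ l' : List V, l'.Perm (x :: l) ∧
      permCost H l'.formPerm ≤ permCost H l.formPerm + f x := by
  obtain ⟨p, hp, x, hx, hpx⟩ : ∃ p ∈ l, ∃ x ∉ l, G.Adj p x := by
    by_contra! hclosed
    exact hy ((hG r y).mem_of_forall_adj (S := {v | v ∈ l})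
      (fun a b hab ha => by_contra fun hb => hclosed a ha b hb hab) hr)
  obtain ⟨l', hperm, hform⟩ := hl.exists_perm_formPerm_eq_swap_mul hp x
  refine ⟨x, hx, l', hperm, ?_⟩
  rw [hform]
  exact (permCost_swap_mul_le htri (hH0 x) (List.formPerm_apply_of_notMem hx)
    (ne_of_mem_of_not_mem hp hx).symm).trans (add_le_add le_rfl (hf x p hpx.symm))

theorem SimpleGraph.Preconnected.exists_permCost_formPerm_le (hG : G.Preconnected)
    (hH0 : ∀ v, H v v = 0) (htri : ∀ x y z, H x z ≤ H x y + H y z)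
    (hf : ∀ x y, G.Adj x y → H x y + H y x ≤ f x) (r : V) :
    ∃ l : List V, l.Nodup ∧ (∀ v, v ∈ l) ∧ permCost H l.formPerm ≤ ∑ v ∈ univ.erase r, f v := by
  have grow : ∀ k < Fintype.card V, ∃ l : List V, l.Nodup ∧ r ∈ l ∧ l.length = k + 1 ∧
      permCost H l.formPerm ≤ ∑ v ∈ l.toFinset.erase r, f v := by
    intro k hk
    induction k with
    | zero =>
      exact ⟨[r], List.nodup_singleton r, List.mem_singleton_self r, rfl, by simp [permCost, hH0]⟩
    | succ k ih =>
      obtain ⟨l, hl, hr, hlen, hcost⟩ := ih (by omega)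
      obtain ⟨y, hy⟩ : ∃ y, y ∉ l := not_forall.1 fun hall => by
        have := hl.length_eq_card_iff.2 hall
        omega
      obtain ⟨x, hx, l', hperm, hcost'⟩ := hG.exists_perm_cons_permCost_le hH0 htri hf hl hr hy
      refine ⟨l', hperm.nodup_iff.2 (List.nodup_cons.2 ⟨hx, hl⟩),
        hperm.mem_iff.2 (List.mem_cons_of_mem x hr),
        by rw [hperm.length_eq, List.length_cons, hlen], ?_⟩
      rw [List.toFinset_eq_of_perm _ _ hperm, List.toFinset_cons,
        erase_insert_of_ne (ne_of_mem_of_not_mem hr hx).symm,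
        sum_insert fun h => hx (List.mem_toFinset.1 (mem_of_mem_erase h))]
      linarith
  have hV := Fintype.card_pos_iff.2 ⟨r⟩
  obtain ⟨l, hl, -, hlen, hcost⟩ := grow (Fintype.card V - 1) (by omega)
  have hall := hl.length_eq_card_iff.1 (by omega)
  have huniv : l.toFinset = univ := eq_univ_iff_forall.2 fun v => List.mem_toFinset.2 (hall v)
  exact ⟨l, hl, hall, huniv ▸ hcost⟩

end Tours

/-- If `G` is a tree on `n` vertices, the random walk with the minimum-degree conductance
function `c(u,v) = 1 / min(deg u, deg v)` has cyclic cover time at most `4 n²`.  Here `H` is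
the hitting-time function of the random walk with transition probabilities proportional to
the conductances. -/
theorem tree_min_degree_cyclic_cover_time_le {V : Type*} [Fintype V] [DecidableEq V]
    (G : SimpleGraph V) [DecidableRel G.Adj] (hG : G.IsTree)
    (n : ℕ) (hn : n = Fintype.card V)
    (H : V → V → ℝ) (hH0 : ∀ v, H v v = 0)
    (hH : ∀ u v, u ≠ v → H u v = 1 + ∑ w, (cMin G u w / ∑ x, cMin G u x) * H w v) :
    ∃ σ : Fin (Fintype.card V) ≃ V, cycSum H σ ≤ 4 * (n : ℝ) ^ 2 := by
  have hconn := hG.connected.preconnected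
  obtain ⟨r⟩ := hG.connected.nonempty
  have hHit : IsHittingTime (walkMatrix (cMin G)) H := ⟨hH0, hH⟩
  set K := ∑ x, ∑ y, cMin G x y
  have hK0 : 0 ≤ K := sum_nonneg fun x _ => sum_nonneg fun y _ => (isConductance_cMin G).nonneg x y
  have hcommute (x y : V) (hxy : G.Adj x y) : H x y + H y x ≤ K * G.degree x := by
    rw [hG.add_hittingTime_eq hHit hxy, mul_comm]
    exact mul_le_mul_of_nonneg_left (by exact_mod_cast min_le_left _ _) hK0
  obtain ⟨l, hl, hall, hcost⟩ := hconn.exists_permCost_formPerm_le hH0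
    (hHit.triangle hconn (isConductance_cMin G)) hcommute r
  obtain ⟨σ, hσ⟩ := exists_cycSum_eq_permCost H hl hall
  refine ⟨σ, hσ ▸ hcost.trans ?_⟩
  have hE : (#G.edgeFinset : ℝ) + 1 = n := by exact_mod_cast hn ▸ hG.card_edgeFinset
  calc ∑ v ∈ univ.erase r, K * G.degree v ≤ ∑ v, K * G.degree v :=
        sum_le_sum_of_subset_of_nonneg (erase_subset r univ) fun v _ _ =>
          mul_nonneg hK0 (Nat.cast_nonneg _)
    _ = K * (2 * #G.edgeFinset) := by
        rw [← mul_sum]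
        exact_mod_cast congrArg (fun d : ℕ => K * d) G.sum_degrees_eq_twice_card_edges
    _ ≤ 2 * #G.edgeFinset * (2 * #G.edgeFinset) := by gcongr; exact sum_sum_cMin_le G
    _ ≤ 4 * (n : ℝ) ^ 2 := by nlinarith
end

section
/- For every connected graph G on n vertices with edge resistances r(e) > 0, the effective resistances satisfy Foster's identity: ∑_{e∈E} R(e)/r(e) = n − 1, where R(e) is the effective resistance between the endpoints of e. -/
open Finset Matrix

/-- `R` is the effective resistance between `u` and `v` in the electrical network with
conductances `c`: there is a potential `φ` satisfying Kirchhoff's current law at every vertex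
other than `u, v`, with total current `1` flowing out of `u`, and `R = φ u - φ v`. -/
def IsEffRes {V : Type*} [Fintype V] (c : V → V → ℝ) (u v : V) (R : ℝ) : Prop :=
  ∃ φ : V → ℝ, (∀ w, w ≠ u → w ≠ v → ∑ x, c w x * (φ w - φ x) = 0) ∧
    (∑ x, c u x * (φ u - φ x) = 1) ∧ R = φ u - φ v

section FosterAux

variable {V : Type*} [Fintype V] [DecidableEq V]

/-- Laplacian matrix of a symmetric conductance function. -/
noncomputable def fosterL (c : V → V → ℝ) : Matrix V V ℝ :=
  Matrix.of fun w x => (if w = x then ∑ y, c w y else 0) - c w x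

lemma fosterL_mulVec (c : V → V → ℝ) (φ : V → ℝ) (w : V) :
    (fosterL c).mulVec φ w = ∑ x, c w x * (φ w - φ x) := by
  simp only [Matrix.mulVec, dotProduct, fosterL, Matrix.of_apply, sub_mul, ite_mul,
    zero_mul, mul_sub, Finset.sum_sub_distrib, Finset.sum_ite_eq, Finset.mem_univ, if_true]
  rw [Finset.sum_mul]

/-- The combinatorial lemma: a function vanishing off adjacent pairs sums over all ordered
pairs to the sum over edges of the symmetrized function. -/
lemma sum_pairs_eq_sum_edges (G : SimpleGraph V) [DecidableRel G.Adj]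
    (h : V → V → ℝ) (h0 : ∀ w x, ¬ G.Adj w x → h w x = 0)
    (g : Sym2 V → ℝ) (hg : ∀ u v, G.Adj u v → g s(u, v) = h u v + h v u) :
    ∑ w, ∑ x, h w x = ∑ e ∈ G.edgeFinset, g e := by
  classical
  have h1 : ∑ w, ∑ x, h w x = ∑ p : V × V, h p.1 p.2 := by
    rw [Fintype.sum_prod_type]
  set s : Finset (V × V) := Finset.univ.filter (fun p : V × V => G.Adj p.1 p.2) with hs
  have h2 : ∑ p : V × V, h p.1 p.2 = ∑ p ∈ s, h p.1 p.2 := by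
    refine (Finset.sum_subset (Finset.filter_subset _ _) ?_).symm
    intro p _ hp
    simp only [hs, Finset.mem_filter, Finset.mem_univ, true_and] at hp
    exact h0 _ _ hp
  have hmaps : ∀ p ∈ s, s(p.1, p.2) ∈ G.edgeFinset := by
    intro p hp
    simp only [hs, Finset.mem_filter, Finset.mem_univ, true_and] at hp
    rw [SimpleGraph.mem_edgeFinset]
    exact hp
  rw [h1, h2, ← Finset.sum_fiberwise_of_maps_to hmaps (fun p => h p.1 p.2)]
  refine Finset.sum_congr rfl ?_
  intro e he
  rw [SimpleGraph.mem_edgeFinset] at he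
  induction e with
  | _ u v =>
    have huv : G.Adj u v := he
    have hne : u ≠ v := huv.ne
    have hfiber : s.filter (fun p : V × V => s(p.1, p.2) = s(u, v)) = {(u, v), (v, u)} := by
      ext ⟨a, b⟩
      simp only [hs, Finset.mem_filter, Finset.filter_filter, Finset.mem_univ, true_and,
        Finset.mem_insert, Finset.mem_singleton, Prod.mk.injEq, Sym2.eq_iff]
      constructor
      · rintro ⟨-, (⟨rfl, rfl⟩ | ⟨rfl, rfl⟩)⟩
        · exact Or.inl ⟨rfl, rfl⟩
        · exact Or.inr ⟨rfl, rfl⟩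
      · rintro (⟨rfl, rfl⟩ | ⟨rfl, rfl⟩)
        · exact ⟨huv, Or.inl ⟨rfl, rfl⟩⟩
        · exact ⟨huv.symm, Or.inr ⟨rfl, rfl⟩⟩
    rw [hfiber, Finset.sum_pair (by simp [hne, hne.symm] : ((u, v) : V × V) ≠ (v, u)),
      hg u v huv]

end FosterAux

/-- Foster's identity: for every connected graph `G` on `n` vertices with positive edge
resistances `r` (conductances `1/r` on edges, `0` on non-edges), the effective resistances
`R(e)` of the edges satisfy `∑_{e ∈ E} R(e) / r(e) = n - 1`. -/
theorem foster_identity {V : Type*} [Fintype V] [DecidableEq V]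
    (G : SimpleGraph V) [DecidableRel G.Adj] (hG : G.Connected)
    (n : ℕ) (hn : n = Fintype.card V)
    (r : Sym2 V → ℝ) (hr : ∀ e ∈ G.edgeSet, 0 < r e)
    (R : Sym2 V → ℝ)
    (hR : ∀ u v, G.Adj u v →
      IsEffRes (fun a b => if G.Adj a b then 1 / r s(a, b) else 0) u v (R s(u, v))) :
    ∑ e ∈ G.edgeFinset, R e / r e = (n : ℝ) - 1 := by
  classical
  set c : V → V → ℝ := fun a b => if G.Adj a b then 1 / r s(a, b) else 0 with hc
  -- basic properties of c
  have hcsymm : ∀ a b, c a b = c b a := by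
    intro a b
    simp only [hc]
    by_cases h : G.Adj a b
    · rw [if_pos h, if_pos h.symm, Sym2.eq_swap]
    · rw [if_neg h, if_neg (fun h' => h h'.symm)]
  have hcself : ∀ a, c a a = 0 := by
    intro a; simp [hc]
  have hcnonneg : ∀ a b, 0 ≤ c a b := by
    intro a b
    simp only [hc]
    by_cases h : G.Adj a b
    · rw [if_pos h]
      exact le_of_lt (div_pos one_pos (hr _ h))
    · rw [if_neg h]
  have hcpos : ∀ a b, G.Adj a b → 0 < c a b := by
    intro a b h
    simp only [hc, if_pos h]
    exact div_pos one_pos (hr _ h)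
  -- setup
  set L : Matrix V V ℝ := fosterL c with hL
  have hLmv : ∀ (φ : V → ℝ) (w : V), L.mulVec φ w = ∑ x, c w x * (φ w - φ x) :=
    fun φ w => fosterL_mulVec c φ w
  have hVne : Nonempty V := hG.nonempty
  have hcard : (0:ℝ) < (Fintype.card V : ℝ) := by exact_mod_cast Fintype.card_pos
  set N : ℝ := (Fintype.card V : ℝ) with hN
  have hNne : N ≠ 0 := ne_of_gt hcard
  set J : Matrix V V ℝ := Matrix.of fun _ _ => (1:ℝ) with hJ
  set A : Matrix V V ℝ := L + N⁻¹ • J with hA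
  -- quadratic form of the Laplacian
  have hquad : ∀ z : V → ℝ, 2 * (z ⬝ᵥ L.mulVec z) = ∑ w, ∑ x, c w x * (z w - z x)^2 := by
    intro z
    have h1 : z ⬝ᵥ L.mulVec z = ∑ w, ∑ x, z w * (c w x * (z w - z x)) := by
      simp only [dotProduct]
      refine Finset.sum_congr rfl fun w _ => ?_
      rw [hLmv, Finset.mul_sum]
    have h2 : z ⬝ᵥ L.mulVec z = ∑ w, ∑ x, z x * (c w x * (z x - z w)) := by
      rw [h1, Finset.sum_comm]
      refine Finset.sum_congr rfl fun w _ => Finset.sum_congr rfl fun x _ => ?_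
      rw [hcsymm x w]
    rw [two_mul]
    nth_rewrite 1 [h1]
    rw [h2, ← Finset.sum_add_distrib]
    refine Finset.sum_congr rfl fun w _ => ?_
    rw [← Finset.sum_add_distrib]
    refine Finset.sum_congr rfl fun x _ => ?_
    ring
  -- A has trivial kernel
  have hzero : ∀ z : V → ℝ, A.mulVec z = 0 → z = 0 := by
    intro z hz
    have hdz : z ⬝ᵥ A.mulVec z = 0 := by rw [hz, dotProduct_zero]
    have hJz : z ⬝ᵥ J.mulVec z = (∑ x, z x) * (∑ x, z x) := by
      simp [hJ, Matrix.mulVec, dotProduct, Finset.sum_mul]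
    have hsplit : z ⬝ᵥ L.mulVec z + N⁻¹ * ((∑ x, z x) * (∑ x, z x)) = 0 := by
      rw [← hJz, ← smul_eq_mul, ← dotProduct_smul, ← Matrix.smul_mulVec,
        ← dotProduct_add, ← Matrix.add_mulVec, ← hA, hdz]
    have hsq : 0 ≤ ∑ w, ∑ x, c w x * (z w - z x)^2 :=
      Finset.sum_nonneg fun w _ => Finset.sum_nonneg fun x _ =>
        mul_nonneg (hcnonneg w x) (sq_nonneg _)
    have hLnn : 0 ≤ z ⬝ᵥ L.mulVec z := by
      have := hquad z; linarith
    have hJnn : 0 ≤ N⁻¹ * ((∑ x, z x) * (∑ x, z x)) :=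
      mul_nonneg (le_of_lt (inv_pos.mpr hcard)) (mul_self_nonneg _)
    have hLz0 : z ⬝ᵥ L.mulVec z = 0 := by linarith
    have hsum0 : (∑ x, z x) = 0 := by
      have h0 : N⁻¹ * ((∑ x, z x) * (∑ x, z x)) = 0 := by linarith
      have := mul_eq_zero.mp h0
      rcases this with h | h
      · exact absurd h (inv_ne_zero hNne)
      · rcases mul_self_eq_zero.mp h with h'
        exact h'
    -- z is constant on edges
    have hqz : ∑ w, ∑ x, c w x * (z w - z x)^2 = 0 := by
      have := hquad z; linarith
    have hedge : ∀ w x, G.Adj w x → z w = z x := by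
      intro w x hwx
      have hterm : ∀ w ∈ (Finset.univ : Finset V), ∑ x, c w x * (z w - z x)^2 = 0 := by
        rw [← Finset.sum_eq_zero_iff_of_nonneg]
        · exact hqz
        · exact fun w _ => Finset.sum_nonneg fun x _ => mul_nonneg (hcnonneg w x) (sq_nonneg _)
      have hterm2 : ∀ x ∈ (Finset.univ : Finset V), c w x * (z w - z x)^2 = 0 := by
        rw [← Finset.sum_eq_zero_iff_of_nonneg]
        · exact hterm w (Finset.mem_univ w)
        · exact fun x _ => mul_nonneg (hcnonneg w x) (sq_nonneg _)
      have := hterm2 x (Finset.mem_univ x)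
      rcases mul_eq_zero.mp this with h | h
      · exact absurd h (ne_of_gt (hcpos w x hwx))
      · have := pow_eq_zero_iff (n := 2) (by norm_num) |>.mp h
        linarith [sub_eq_zero.mp this]
    -- z is globally constant by connectivity
    have hwalk : ∀ {w x : V} (_ : G.Walk w x), z w = z x := by
      intro w x p
      induction p with
      | nil => rfl
      | cons h _ ih => exact (hedge _ _ h).trans ih
    have hconst : ∀ w x, z w = z x := by
      intro w x
      exact (hG.preconnected w x).elim fun p => hwalk p
    funext w
    have : ∑ x, z x = (Fintype.card V : ℝ) * z w := by
      rw [Finset.sum_congr rfl fun x _ => hconst x w]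
      simp [Finset.card_univ, mul_comm]
    rw [hsum0] at this
    have := (mul_eq_zero.mp this.symm)
    rcases this with h | h
    · exact absurd h hNne
    · exact h
  -- A is invertible
  have hAunit : IsUnit A := by
    rw [← Matrix.mulVec_injective_iff_isUnit]
    intro x y hxy
    have h0 : A.mulVec (x - y) = 0 := by
      rw [Matrix.mulVec_sub, hxy, sub_self]
    exact sub_eq_zero.mp (hzero _ h0)
  have hAdet : IsUnit A.det := (Matrix.isUnit_iff_isUnit_det A).mp hAunit
  set M : Matrix V V ℝ := A⁻¹ with hM
  have hMA : M * A = 1 := Matrix.nonsing_inv_mul A hAdet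
  have hAM : A * M = 1 := Matrix.mul_nonsing_inv A hAdet
  -- row and column sums of M are 1
  have hL1 : L.mulVec (fun _ => 1) = 0 := by
    funext w; rw [hLmv]; simp
  have hA1 : A.mulVec (fun _ => 1) = (fun _ => 1) := by
    funext w
    rw [hA, Matrix.add_mulVec, Pi.add_apply, Matrix.smul_mulVec, hL1]
    simp only [Pi.zero_apply, Pi.smul_apply, smul_eq_mul, zero_add]
    have : J.mulVec (fun _ => (1:ℝ)) w = N := by
      simp [hJ, Matrix.mulVec, dotProduct, hN, Finset.card_univ]
    rw [this, inv_mul_cancel₀ hNne]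
  have hM1 : M.mulVec (fun _ => 1) = (fun _ => 1) := by
    conv_lhs => rw [← hA1]
    rw [Matrix.mulVec_mulVec, hMA, Matrix.one_mulVec]
  have h1L : Matrix.vecMul (fun _ => 1) L = 0 := by
    funext x
    simp only [Matrix.vecMul, dotProduct, one_mul, hL, fosterL, Matrix.of_apply]
    rw [Finset.sum_sub_distrib]
    rw [Finset.sum_ite_eq' Finset.univ x (fun w => ∑ y, c w y)]
    simp only [Finset.mem_univ, if_true, Pi.zero_apply]
    rw [Finset.sum_congr rfl fun w _ => hcsymm w x]
    ring
  have h1A : Matrix.vecMul (fun _ => 1) A = (fun _ => 1) := by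
    funext x
    rw [hA, Matrix.vecMul_add, Pi.add_apply, h1L]
    simp only [Pi.zero_apply, zero_add]
    have : Matrix.vecMul (fun _ => (1:ℝ)) (N⁻¹ • J) x = N⁻¹ * N := by
      simp [hJ, Matrix.vecMul, dotProduct, hN, Finset.card_univ, Finset.mul_sum]
    rw [this, inv_mul_cancel₀ hNne]
  have h1M : Matrix.vecMul (fun _ => 1) M = (fun _ => 1) := by
    conv_lhs => rw [← h1A]
    rw [Matrix.vecMul_vecMul, hAM, Matrix.vecMul_one]
  -- the effective resistance of an edge in terms of M
  have hRedge : ∀ u v, G.Adj u v → R s(u, v) = M u u + M v v - M u v - M v u := by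
    intro u v huv
    obtain ⟨φ, hKCL, hu, hRdef⟩ := hR u v huv
    have hne : u ≠ v := huv.ne
    set δ : V → ℝ := Pi.single u 1 - Pi.single v 1 with hδ
    have hδu : δ u = 1 := by simp [hδ, Pi.single_apply, hne]
    have hδv : δ v = -1 := by simp [hδ, Pi.single_apply, hne.symm]
    have hδo : ∀ w, w ≠ u → w ≠ v → δ w = 0 := by
      intro w hwu hwv; simp [hδ, Pi.single_apply, hwu, hwv]
    have hLφu : L.mulVec φ u = 1 := by rw [hLmv]; exact hu
    have hLφo : ∀ w, w ≠ u → w ≠ v → L.mulVec φ w = 0 := by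
      intro w hwu hwv; rw [hLmv]; exact hKCL w hwu hwv
    have htot : ∑ w, L.mulVec φ w = 0 := by
      have e0 : ∑ w, L.mulVec φ w = ∑ w, ∑ x, c w x * (φ w - φ x) :=
        Finset.sum_congr rfl fun w _ => hLmv φ w
      have e1 : ∑ w, ∑ x, c w x * (φ w - φ x) = ∑ w, ∑ x, c w x * (φ x - φ w) := by
        rw [Finset.sum_comm]
        exact Finset.sum_congr rfl fun w _ => Finset.sum_congr rfl fun x _ => by
          rw [hcsymm x w]
      have e2 : (∑ w, ∑ x, c w x * (φ w - φ x)) + (∑ w, ∑ x, c w x * (φ w - φ x)) = 0 := by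
        nth_rewrite 2 [e1]
        rw [← Finset.sum_add_distrib]
        refine Finset.sum_eq_zero fun w _ => ?_
        rw [← Finset.sum_add_distrib]
        exact Finset.sum_eq_zero fun x _ => by ring
      rw [e0]; linarith
    have hLφv : L.mulVec φ v = -1 := by
      have hpair : ∑ w ∈ ({u, v} : Finset V), L.mulVec φ w = ∑ w, L.mulVec φ w := by
        refine Finset.sum_subset (Finset.subset_univ _) ?_
        intro w _ hw
        simp only [Finset.mem_insert, Finset.mem_singleton, not_or] at hw
        exact hLφo w hw.1 hw.2
      rw [Finset.sum_pair hne, htot, hLφu] at hpair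
      linarith
    have hLφ : L.mulVec φ = δ := by
      funext w
      by_cases hwu : w = u
      · subst hwu; rw [hLφu, hδu]
      by_cases hwv : w = v
      · subst hwv; rw [hLφv, hδv]
      rw [hLφo w hwu hwv, hδo w hwu hwv]
    -- solve for φ via M
    have hAφ : A.mulVec φ = δ + (N⁻¹ * ∑ x, φ x) • (fun _ => (1:ℝ)) := by
      funext w
      rw [hA, Matrix.add_mulVec, Pi.add_apply, hLφ, Matrix.smul_mulVec, Pi.add_apply,
        Pi.smul_apply, Pi.smul_apply, smul_eq_mul, smul_eq_mul]
      congr 1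
      have : J.mulVec φ w = ∑ x, φ x := by
        simp [hJ, Matrix.mulVec, dotProduct]
      rw [this]; ring
    have hφeq : φ = M.mulVec δ + (N⁻¹ * ∑ x, φ x) • (fun _ => (1:ℝ)) := by
      have h0 : M.mulVec (A.mulVec φ) = φ := by
        rw [Matrix.mulVec_mulVec, hMA, Matrix.one_mulVec]
      have h1 : M.mulVec (A.mulVec φ) = M.mulVec δ + (N⁻¹ * ∑ x, φ x) • (fun _ => (1:ℝ)) := by
        rw [hAφ, Matrix.mulVec_add, Matrix.mulVec_smul, hM1]
      rw [h0] at h1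
      exact h1
    have hMδ : ∀ w, M.mulVec δ w = M w u - M w v := by
      intro w
      rw [hδ, Matrix.mulVec_sub, Pi.sub_apply, Matrix.mulVec_single, Matrix.mulVec_single]
      simp
    have h2 := congrFun hφeq u
    have h3 := congrFun hφeq v
    simp only [Pi.add_apply, Pi.smul_apply, smul_eq_mul, mul_one] at h2 h3
    rw [hRdef, h2, h3, hMδ u, hMδ v]
    ring
  -- traces
  have htrAM : (A * M).trace = N := by
    rw [hAM, Matrix.trace_one, hN]
  have hMrow : ∀ x, ∑ w, M x w = 1 := by
    intro x
    have := congrFun hM1 x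
    simpa [Matrix.mulVec, dotProduct] using this
  have htrJM : (J * M).trace = N := by
    simp only [Matrix.trace, Matrix.diag, Matrix.mul_apply, hJ, Matrix.of_apply, one_mul]
    rw [Finset.sum_comm]
    rw [Finset.sum_congr rfl fun x _ => hMrow x]
    simp [hN, Finset.card_univ]
  have htrLM : (L * M).trace = N - 1 := by
    have hsplit : A * M = L * M + N⁻¹ • (J * M) := by
      rw [hA, Matrix.add_mul, Matrix.smul_mul]
    have h2 := congrArg Matrix.trace hsplit
    rw [htrAM, Matrix.trace_add, Matrix.trace_smul, htrJM, smul_eq_mul,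
      inv_mul_cancel₀ hNne] at h2
    linarith
  -- trace as a sum over ordered pairs
  have htr2 : (L * M).trace = ∑ w, ∑ x, c w x * (M w w - M x w) := by
    simp only [Matrix.trace, Matrix.diag, Matrix.mul_apply, hL, fosterL, Matrix.of_apply,
      sub_mul, ite_mul, zero_mul, Finset.sum_sub_distrib, Finset.sum_ite_eq,
      Finset.mem_univ, if_true, mul_sub]
    congr 1
    exact Finset.sum_congr rfl fun w _ => Finset.sum_mul _ _ _
  -- combine
  have h0 : ∀ w x, ¬ G.Adj w x → c w x * (M w w - M x w) = 0 := by
    intro w x hwx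
    simp [hc, hwx]
  have hg : ∀ u v, G.Adj u v →
      R s(u, v) / r s(u, v) = c u v * (M u u - M v u) + c v u * (M v v - M u v) := by
    intro u v huv
    rw [hcsymm v u, hRedge u v huv]
    have : c u v = 1 / r s(u, v) := by rw [hc]; simp [huv]
    rw [this]
    field_simp
    ring
  have hcomb := sum_pairs_eq_sum_edges G (fun w x => c w x * (M w w - M x w)) h0
    (fun e => R e / r e) (fun u v huv => hg u v huv)
  have hfin : ∑ e ∈ G.edgeFinset, R e / r e = N - 1 := by
    rw [← hcomb, ← htr2, htrLM]
  rw [hfin, hN, hn]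
end

section
/- Let G be a connected graph on n vertices with conductance function c, and let T be a spanning tree of G. Then the cyclic cover time satisfies CYC[G,c] ≤ 2·(∑_{e∈E} c(e))·(∑_{e∈T} R(e)), where R(e) is the effective resistance of edge e. -/
open Finset

/-! The hitting times satisfy the triangle inequality `H a c ≤ H a b + H b c`, by the minimum
principle for the network Laplacian applied to `w ↦ H w b + H b c - H w c`, which is harmonic
away from `b` and `c`. Across an edge `uv` the commute time `H u v + H v u` equals
`2 (∑ c) R(uv)`: `(H · v - H · u) / (2 ∑ c)` carries a unit current from `u` to `v`, and
unit-current potentials are unique up to additive constants. Finally a tour of the vertices is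
grown along the spanning tree: splicing a new vertex `q` into the cyclic order right after its
tree neighbour `p` raises the cyclic sum of hitting times by at most `H p q + H q p`. -/

open Equiv

section Laplacian

variable {V : Type*} [Fintype V] {d : V → V → ℝ}

def laplacian (d : V → V → ℝ) (f : V → ℝ) (w : V) : ℝ :=
  ∑ x, d w x * (f w - f x)

theorem isEffRes_iff {u v : V} {R : ℝ} :
    IsEffRes d u v R ↔ ∃ φ : V → ℝ, (∀ w, w ≠ u → w ≠ v → laplacian d φ w = 0) ∧
      laplacian d φ u = 1 ∧ R = φ u - φ v :=
  Iff.rfl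

theorem laplacian_sub (f g : V → ℝ) (w : V) :
    laplacian d (fun x => f x - g x) w = laplacian d f w - laplacian d g w := by
  simp only [laplacian, ← sum_sub_distrib]
  exact sum_congr rfl fun _ _ => by ring

theorem laplacian_add_const (f : V → ℝ) (a : ℝ) (w : V) :
    laplacian d (fun x => f x + a) w = laplacian d f w := by
  simp only [laplacian, add_sub_add_right_eq_sub]

theorem laplacian_div_const (f : V → ℝ) (a : ℝ) (w : V) :
    laplacian d (fun x => f x / a) w = laplacian d f w / a := by
  simp only [laplacian, sum_div]
  exact sum_congr rfl fun _ _ => by ring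

theorem sum_laplacian_eq_zero (hsymm : ∀ a b, d a b = d b a) (f : V → ℝ) :
    ∑ w, laplacian d f w = 0 := by
  have h : ∑ w, laplacian d f w = -∑ w, laplacian d f w :=
    calc ∑ w, laplacian d f w = ∑ x, ∑ w, d w x * (f w - f x) := sum_comm
      _ = -∑ w, laplacian d f w := by
        simp only [laplacian, ← sum_neg_distrib]
        exact sum_congr rfl fun x _ => sum_congr rfl fun w _ => by rw [hsymm w x]; ring
  linarith

theorem eq_of_isMin_of_laplacian_nonneg (hd : ∀ a b, 0 ≤ d a b) {g : V → ℝ} {w x : V}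
    (hmin : ∀ y, g w ≤ g y) (hL : 0 ≤ laplacian d g w) (hx : 0 < d w x) : g x = g w := by
  have hterm : ∀ y ∈ univ, d w y * (g w - g y) ≤ 0 := fun y _ =>
    mul_nonpos_of_nonneg_of_nonpos (hd w y) (by linarith [hmin y])
  have hzero := (sum_eq_zero_iff_of_nonpos hterm).1 (le_antisymm (sum_nonpos hterm) hL) x
    (mem_univ x)
  linarith [(mul_eq_zero.1 hzero).resolve_left hx.ne', hmin x]

theorem nonneg_of_laplacian_nonneg (hd : ∀ a b, 0 ≤ d a b)
    (hconn : ∀ u v, Relation.ReflTransGen (fun a b => 0 < d a b) u v)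
    {B : Set V} {b : V} (hb : b ∈ B) {g : V → ℝ} (hL : ∀ w ∉ B, 0 ≤ laplacian d g w)
    (hgB : ∀ x ∈ B, 0 ≤ g x) (a : V) : 0 ≤ g a := by
  obtain ⟨w₀, -, hmin⟩ := exists_min_image univ g ⟨b, mem_univ b⟩
  suffices 0 ≤ g w₀ from this.trans (hmin a (mem_univ a))
  by_contra! hneg
  -- a negative minimum spreads along a path of positive conductances until it reaches `B`
  have hspread : ∀ w, Relation.ReflTransGen (fun a b => 0 < d a b) w b → g w ≠ g w₀ := by
    intro w hwb
    induction hwb using Relation.ReflTransGen.head_induction_on with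
    | refl => exact fun h => (hgB b hb).not_gt (h ▸ hneg)
    | @head w x hwx _ ih =>
      intro hw
      have hwB : w ∉ B := fun h => (hgB w h).not_gt (hw ▸ hneg)
      exact ih ((eq_of_isMin_of_laplacian_nonneg hd (fun y => hw ▸ hmin y (mem_univ y))
        (hL w hwB) hwx).trans hw)
  exact hspread w₀ (hconn w₀ b) rfl

theorem eq_of_laplacian_eq_zero (hd : ∀ a b, 0 ≤ d a b)
    (hconn : ∀ u v, Relation.ReflTransGen (fun a b => 0 < d a b) u v)
    {g : V → ℝ} (hL : ∀ w, laplacian d g w = 0) (a b : V) : g a = g b := by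
  have hle : ∀ a b, g b ≤ g a := fun a b => by
    have := nonneg_of_laplacian_nonneg hd hconn (B := {b}) rfl (g := fun x => g x + -g b)
      (fun w _ => by rw [laplacian_add_const, hL]) (by simp) a
    linarith
  exact le_antisymm (hle b a) (hle a b)

theorem IsEffRes.unique (hd : ∀ a b, 0 ≤ d a b) (hsymm : ∀ a b, d a b = d b a)
    (hconn : ∀ u v, Relation.ReflTransGen (fun a b => 0 < d a b) u v) {u v : V} {R₁ R₂ : ℝ}
    (h₁ : IsEffRes d u v R₁) (h₂ : IsEffRes d u v R₂) : R₁ = R₂ := by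
  obtain ⟨φ₁, hharm₁, hu₁, rfl⟩ := isEffRes_iff.1 h₁
  obtain ⟨φ₂, hharm₂, hu₂, rfl⟩ := isEffRes_iff.1 h₂
  have hoff : ∀ w, w ≠ v → laplacian d (fun x => φ₁ x - φ₂ x) w = 0 := by
    intro w hwv
    rw [laplacian_sub]
    rcases eq_or_ne w u with rfl | hwu
    · rw [hu₁, hu₂, sub_self]
    · rw [hharm₁ w hwu hwv, hharm₂ w hwu hwv, sub_self]
  -- the total current vanishes, so none can leave at `v` either
  have hv : laplacian d (fun x => φ₁ x - φ₂ x) v = 0 := by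
    rw [← sum_laplacian_eq_zero hsymm, sum_eq_single v (fun w _ hwv => hoff w hwv) (by simp)]
  have hconst := eq_of_laplacian_eq_zero hd hconn
    (fun w => (eq_or_ne w v).elim (· ▸ hv) (hoff w)) u v
  linarith

end Laplacian

section HittingTime

variable {V : Type*} {H : V → V → ℝ}

variable (H) in
def commuteTime : Sym2 V → ℝ :=
  Sym2.lift ⟨fun u v => H u v + H v u, fun _ _ => add_comm _ _⟩

@[simp]
theorem commuteTime_mk (u v : V) : commuteTime H s(u, v) = H u v + H v u :=
  rfl

theorem commuteTime_nonneg (hnn : ∀ a b, 0 ≤ H a b) (e : Sym2 V) : 0 ≤ commuteTime H e := by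
  induction e using Sym2.ind with
  | _ u v => exact add_nonneg (hnn u v) (hnn v u)

variable [Fintype V] {d : V → V → ℝ}

theorem laplacian_hitting (hd : ∀ a b, 0 ≤ d a b)
    (hH : ∀ u v, u ≠ v → H u v = 1 + ∑ w, (d u w / ∑ x, d u x) * H w v) {v w : V}
    (hwv : w ≠ v) : laplacian d (fun x => H x v) w = ∑ x, d w x := by
  simp only [laplacian, mul_sub, sum_sub_distrib, ← sum_mul]
  rcases eq_or_ne (∑ x, d w x) 0 with hD | hD
  · have hzero := (sum_eq_zero_iff_of_nonneg fun x _ => hd w x).1 hD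
    simp [fun x => hzero x (mem_univ x)]
  · have hmean : ∑ x, (d w x / ∑ y, d w y) * H x v = (∑ x, d w x * H x v) / ∑ y, d w y := by
      rw [sum_div]
      exact sum_congr rfl fun _ _ => by ring
    rw [hH w v hwv, hmean]
    field_simp
    ring

theorem hitting_nonneg (hd : ∀ a b, 0 ≤ d a b)
    (hconn : ∀ u v, Relation.ReflTransGen (fun a b => 0 < d a b) u v) (hH0 : ∀ v, H v v = 0)
    (hL : ∀ v w, w ≠ v → laplacian d (fun x => H x v) w = ∑ x, d w x) (u v : V) :
    0 ≤ H u v :=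
  nonneg_of_laplacian_nonneg hd hconn (B := {v}) rfl
    (fun w hw => (hL v w hw).symm ▸ sum_nonneg fun x _ => hd w x) (by simp [hH0]) u

theorem hitting_triangle (hd : ∀ a b, 0 ≤ d a b)
    (hconn : ∀ u v, Relation.ReflTransGen (fun a b => 0 < d a b) u v) (hH0 : ∀ v, H v v = 0)
    (hL : ∀ v w, w ≠ v → laplacian d (fun x => H x v) w = ∑ x, d w x) (a b c : V) :
    H a c ≤ H a b + H b c := by
  have key := nonneg_of_laplacian_nonneg hd hconn (B := {b, c}) (Set.mem_insert b _)
    (g := fun w => (H w b - H w c) + H b c) ?_ ?_ a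
  · linarith
  · intro w hw
    simp only [Set.mem_insert_iff, Set.mem_singleton_iff, not_or] at hw
    rw [laplacian_add_const, laplacian_sub, hL b w hw.1, hL c w hw.2, sub_self]
  · rintro x (rfl | rfl)
    · simp [hH0]
    · simpa [hH0] using add_nonneg (hitting_nonneg hd hconn hH0 hL x b)
        (hitting_nonneg hd hconn hH0 hL b x)

theorem laplacian_hitting_self (hsymm : ∀ a b, d a b = d b a)
    (hL : ∀ v w, w ≠ v → laplacian d (fun x => H x v) w = ∑ x, d w x) (v : V) :
    laplacian d (fun x => H x v) v = ∑ x, d v x - ∑ w, ∑ x, d w x := by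
  classical
  have htotal := sum_laplacian_eq_zero hsymm (fun x => H x v)
  rw [← add_sum_erase _ _ (mem_univ v),
    sum_congr rfl fun w hw => hL v w (ne_of_mem_erase hw)] at htotal
  rw [← add_sum_erase univ (fun w => ∑ x, d w x) (mem_univ v)]
  linarith

theorem isEffRes_hitting (hsymm : ∀ a b, d a b = d b a) (hH0 : ∀ v, H v v = 0)
    (hL : ∀ v w, w ≠ v → laplacian d (fun x => H x v) w = ∑ x, d w x) {u v : V} (huv : u ≠ v)
    (hm : ∑ w, ∑ x, d w x ≠ 0) :
    IsEffRes d u v ((H u v + H v u) / ∑ w, ∑ x, d w x) := by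
  refine isEffRes_iff.2 ⟨fun w => (H w v - H w u) / ∑ w, ∑ x, d w x, ?_, ?_, ?_⟩
  · intro w hwu hwv
    rw [laplacian_div_const, laplacian_sub, hL v w hwv, hL u w hwu, sub_self, zero_div]
  · rw [laplacian_div_const, laplacian_sub, hL v u huv, laplacian_hitting_self hsymm hL u,
      sub_sub_cancel, div_self hm]
  · simp only [hH0]
    ring

theorem commuteTime_eq_mul_of_isEffRes (hd : ∀ a b, 0 ≤ d a b) (hsymm : ∀ a b, d a b = d b a)
    (hconn : ∀ u v, Relation.ReflTransGen (fun a b => 0 < d a b) u v) (hH0 : ∀ v, H v v = 0)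
    (hL : ∀ v w, w ≠ v → laplacian d (fun x => H x v) w = ∑ x, d w x) {u v : V} (huv : u ≠ v)
    {R : ℝ} (hR : IsEffRes d u v R) : commuteTime H s(u, v) = (∑ w, ∑ x, d w x) * R := by
  have hm : 0 < ∑ w, ∑ x, d w x := by
    obtain ⟨x, hux, -⟩ := ((hconn u v).cases_head).resolve_left huv
    exact sum_pos' (fun w _ => sum_nonneg fun x _ => hd w x)
      ⟨u, mem_univ u, sum_pos' (fun x _ => hd u x) ⟨x, mem_univ x, hux⟩⟩
  rw [hR.unique hd hsymm hconn (isEffRes_hitting hsymm hH0 hL huv hm.ne'), commuteTime_mk]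
  field_simp

end HittingTime

namespace SimpleGraph

variable {V : Type*} {G : SimpleGraph V}

section Conductance

variable [DecidableRel G.Adj] {c : Sym2 V → ℝ}

variable (G c) in
def conductance (a b : V) : ℝ :=
  if G.Adj a b then c s(a, b) else 0

theorem conductance_nonneg (hc : ∀ e ∈ G.edgeSet, 0 ≤ c e) (a b : V) :
    0 ≤ G.conductance c a b := by
  unfold conductance
  split_ifs with h
  exacts [hc _ h, le_rfl]

theorem conductance_comm (a b : V) : G.conductance c a b = G.conductance c b a := by
  simp only [conductance, G.adj_comm a b, Sym2.eq_swap]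

theorem Connected.reflTransGen_conductance_pos (hG : G.Connected)
    (hc : ∀ e ∈ G.edgeSet, 0 < c e) (u v : V) :
    Relation.ReflTransGen (fun a b => 0 < G.conductance c a b) u v :=
  Relation.ReflTransGen.mono (fun a b (h : G.Adj a b) => by simpa [conductance, h] using hc _ h)
    u v ((reachable_iff_reflTransGen u v).1 (hG.preconnected u v))

theorem sum_sum_conductance [Fintype V] [DecidableEq V] :
    ∑ v, ∑ w, G.conductance c v w = 2 * ∑ e ∈ G.edgeFinset, c e := by
  calc ∑ v, ∑ w, G.conductance c v w
      = ∑ d : G.Dart, c d.edge := by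
        rw [← Fintype.sum_prod_type' (f := G.conductance c)]
        simp only [conductance]
        rw [← sum_filter]
        exact sum_bij' (fun p hp => (⟨p, (mem_filter.1 hp).2⟩ : G.Dart)) (fun d _ => d.toProd)
          (fun _ _ => mem_univ _) (fun d _ => mem_filter.2 ⟨mem_univ _, d.adj⟩)
          (fun _ _ => rfl) (fun _ _ => rfl) (fun _ _ => rfl)
    _ = ∑ e ∈ G.edgeFinset, ∑ d : G.Dart with d.edge = e, c d.edge :=
        (sum_fiberwise_of_maps_to (g := Dart.edge)
          (fun d _ => G.mem_edgeFinset.2 d.edge_mem) fun d => c d.edge).symm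
    _ = ∑ e ∈ G.edgeFinset, 2 * c e := by
        refine sum_congr rfl fun e he => ?_
        rw [sum_congr rfl fun d hd => congrArg c (mem_filter.1 hd).2, sum_const,
          G.dart_edge_fiber_card e (G.mem_edgeFinset.1 he), nsmul_eq_mul, Nat.cast_ofNat]
    _ = 2 * ∑ e ∈ G.edgeFinset, c e := (mul_sum ..).symm

end Conductance

theorem Preconnected.exists_adj_boundary (hG : G.Preconnected) {S : Set V} {u v : V}
    (hu : u ∈ S) (hv : v ∉ S) : ∃ p ∈ S, ∃ q ∉ S, G.Adj p q := by
  obtain ⟨w⟩ := hG u v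
  obtain ⟨d, -, hd⟩ := w.exists_boundary_dart S hu hv
  exact ⟨d.fst, hd.1, d.snd, hd.2, d.adj⟩

end SimpleGraph

theorem List.Nodup.forall_mem_iff_length_eq_card {α : Type*} [Fintype α] [DecidableEq α]
    {l : List α} (hl : l.Nodup) : (∀ a, a ∈ l) ↔ l.length = Fintype.card α := by
  rw [← List.toFinset_card_of_nodup hl, card_eq_iff_eq_univ, eq_univ_iff_forall]
  simp only [List.mem_toFinset]

/-- Splicing `q` into the cycle of `l` right after `p`. -/
theorem List.exists_formPerm_eq_mul_swap {α : Type*} [DecidableEq α] {l : List α} {p q : α}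
    (hl : l.Nodup) (hp : p ∈ l) (hq : q ∉ l) :
    ∃ l' : List α, l'.Nodup ∧ l'.toFinset = insert q l.toFinset ∧
      l'.formPerm = l.formPerm * Equiv.swap p q := by
  obtain ⟨xs, ys, rfl⟩ := List.append_of_mem hp
  have hrot : xs ++ p :: ys ~r (ys ++ xs) ++ [p] :=
    List.isRotated_append.trans (by simpa using List.isRotated_append (l := [p]) (l' := ys ++ xs))
  have hperm : ((ys ++ xs) ++ [p, q]).Perm (q :: (xs ++ p :: ys)) := by
    have := (hrot.perm.symm.append_right [q]).trans (List.perm_append_singleton q _)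
    simpa using this
  refine ⟨(ys ++ xs) ++ [p, q], hperm.nodup_iff.2 (List.nodup_cons.2 ⟨hq, hl⟩), ?_, ?_⟩
  · ext x
    simp only [List.mem_toFinset, hperm.mem_iff, List.mem_cons, mem_insert]
  · rw [List.formPerm_append_pair, List.formPerm_eq_of_isRotated hl hrot]

section Tour

variable {V : Type*} [Fintype V] [DecidableEq V] {H : V → V → ℝ}

variable (H) in
def tourCost (f : Perm V) : ℝ :=
  ∑ v, H v (f v)

theorem tourCost_mul_swap_le (hH0 : ∀ v, H v v = 0) (htri : ∀ a b c, H a c ≤ H a b + H b c)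
    {f : Perm V} {p q : V} (hpq : p ≠ q) (hq : f q = q) :
    tourCost H (f * swap p q) ≤ tourCost H f + commuteTime H s(p, q) := by
  have hdiff : tourCost H (f * swap p q) - tourCost H f = H p q + H q (f p) - H p (f p) := by
    rw [tourCost, tourCost, ← sum_sub_distrib, Fintype.sum_eq_add p q hpq]
    · simp [hq, hH0]
      ring
    · rintro x ⟨hxp, hxq⟩
      simp [swap_apply_of_ne_of_ne hxp hxq]
  have := htri q p (f p)
  rw [commuteTime_mk]
  linarith

theorem exists_tour_extend (hH0 : ∀ v, H v v = 0) (hnn : ∀ a b, 0 ≤ H a b)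
    (htri : ∀ a b c, H a c ≤ H a b + H b c) {T : Finset (Sym2 V)}
    (hT : (SimpleGraph.fromEdgeSet (T : Set (Sym2 V))).Preconnected) {l : List V}
    (hl : l.Nodup) (hne : l ≠ [])
    (hcost : tourCost H l.formPerm ≤ ∑ e ∈ T with e ∈ l.toFinset.sym2, commuteTime H e)
    {v : V} (hv : v ∉ l) :
    ∃ l' : List V, l'.Nodup ∧ l'.length = l.length + 1 ∧
      tourCost H l'.formPerm ≤ ∑ e ∈ T with e ∈ l'.toFinset.sym2, commuteTime H e := by
  obtain ⟨u, hu⟩ := List.exists_mem_of_ne_nil l hne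
  obtain ⟨p, hp, q, hq, hpq⟩ := hT.exists_adj_boundary (S := {x | x ∈ l}) hu hv
  rw [SimpleGraph.fromEdgeSet_adj] at hpq
  obtain ⟨l', hl', hset, hperm⟩ := List.exists_formPerm_eq_mul_swap hl hp hq
  have hqS : q ∉ l.toFinset := by simpa using hq
  refine ⟨l', hl', ?_, ?_⟩
  · rw [← List.toFinset_card_of_nodup hl', hset, card_insert_of_notMem hqS,
      List.toFinset_card_of_nodup hl]
  have hnew : s(p, q) ∉ T.filter (· ∈ l.toFinset.sym2) := fun h =>
    hqS (mem_sym2_iff.1 (mem_filter.1 h).2 q (Sym2.mem_mk_right p q))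
  have hsub : insert s(p, q) (T.filter (· ∈ l.toFinset.sym2)) ⊆
      T.filter (· ∈ l'.toFinset.sym2) := by
    intro e he
    rw [mem_filter, hset]
    rcases mem_insert.1 he with rfl | he
    · refine ⟨hpq.1, mem_sym2_iff.2 fun x hx => ?_⟩
      rcases Sym2.mem_iff.1 hx with rfl | rfl
      · exact mem_insert_of_mem (List.mem_toFinset.2 hp)
      · exact mem_insert_self _ _
    · exact ⟨(mem_filter.1 he).1, sym2_mono (subset_insert _ _) (mem_filter.1 he).2⟩
  calc tourCost H l'.formPerm
      ≤ tourCost H l.formPerm + commuteTime H s(p, q) := by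
        rw [hperm]
        exact tourCost_mul_swap_le hH0 htri hpq.2 (List.formPerm_apply_of_notMem hq)
    _ ≤ ∑ e ∈ insert s(p, q) (T.filter (· ∈ l.toFinset.sym2)), commuteTime H e := by
        rw [sum_insert hnew]
        linarith
    _ ≤ ∑ e ∈ T with e ∈ l'.toFinset.sym2, commuteTime H e :=
        sum_le_sum_of_subset_of_nonneg hsub fun e _ _ => commuteTime_nonneg hnn e

theorem exists_partial_tour (hH0 : ∀ v, H v v = 0) (hnn : ∀ a b, 0 ≤ H a b)
    (htri : ∀ a b c, H a c ≤ H a b + H b c) {T : Finset (Sym2 V)}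
    (hT : (SimpleGraph.fromEdgeSet (T : Set (Sym2 V))).Connected) :
    ∀ k < Fintype.card V, ∃ l : List V, l.Nodup ∧ l.length = k + 1 ∧
      tourCost H l.formPerm ≤ ∑ e ∈ T with e ∈ l.toFinset.sym2, commuteTime H e
  | 0, _ => by
    obtain ⟨r⟩ := hT.nonempty
    refine ⟨[r], List.nodup_singleton r, rfl, ?_⟩
    simp only [List.formPerm_singleton, tourCost, Perm.one_apply, hH0, sum_const_zero]
    exact sum_nonneg fun e _ => commuteTime_nonneg hnn e
  | k + 1, hk => by
    obtain ⟨l, hl, hlen, hcost⟩ := exists_partial_tour hH0 hnn htri hT k (by omega)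
    obtain ⟨v, hv⟩ : ∃ v, v ∉ l := by
      by_contra! hall
      have := hl.forall_mem_iff_length_eq_card.1 hall
      omega
    obtain ⟨l', hl', hlen', hcost'⟩ := exists_tour_extend hH0 hnn htri hT.preconnected hl
      (List.ne_nil_of_length_pos (by omega)) hcost hv
    exact ⟨l', hl', by omega, hcost'⟩

theorem exists_tour_le (hH0 : ∀ v, H v v = 0) (hnn : ∀ a b, 0 ≤ H a b)
    (htri : ∀ a b c, H a c ≤ H a b + H b c) {T : Finset (Sym2 V)}
    (hT : (SimpleGraph.fromEdgeSet (T : Set (Sym2 V))).Connected) :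
    ∃ l : List V, l.Nodup ∧ (∀ v, v ∈ l) ∧
      tourCost H l.formPerm ≤ ∑ e ∈ T, commuteTime H e := by
  have hpos : 0 < Fintype.card V := Fintype.card_pos_iff.2 hT.nonempty
  obtain ⟨l, hl, hlen, hcost⟩ := exists_partial_tour hH0 hnn htri hT (Fintype.card V - 1) (by omega)
  have hall := hl.forall_mem_iff_length_eq_card.2 (by omega)
  refine ⟨l, hl, hall, hcost.trans_eq ?_⟩
  rw [filter_true_of_mem fun e _ => mem_sym2_iff.2 fun x _ => List.mem_toFinset.2 (hall x)]

theorem exists_cycSum_eq_tourCost {l : List V} (hl : l.Nodup) (hall : ∀ v, v ∈ l)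
    (H : V → V → ℝ) : ∃ σ : Fin (Fintype.card V) ≃ V, cycSum H σ = tourCost H l.formPerm := by
  have hlen := hl.forall_mem_iff_length_eq_card.1 hall
  let σ := (finCongr hlen.symm).trans (hl.getEquivOfForallMemList l hall)
  refine ⟨σ, ?_⟩
  rw [tourCost, ← σ.sum_comp]
  refine sum_congr rfl fun i _ => ?_
  have hσ : ∀ j : Fin (Fintype.card V), σ j = l[j.val]'(hlen.symm ▸ j.isLt) := fun _ => rfl
  rw [hσ, hσ, List.formPerm_apply_getElem l hl]
  simp only [hlen]

end Tour

theorem cyclic_cover_time_le_conductance_mul_tree_resistance_general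
    {V : Type*} [Fintype V]
    (G : SimpleGraph V) [DecidableRel G.Adj] (hG : G.Connected)
    (c : Sym2 V → ℝ) (hc : ∀ e ∈ G.edgeSet, 0 < c e)
    (R : Sym2 V → ℝ)
    (hR : ∀ u v, G.Adj u v →
      IsEffRes (fun a b => if G.Adj a b then c s(a, b) else 0) u v (R s(u, v)))
    (H : V → V → ℝ) (hH0 : ∀ v, H v v = 0)
    (hH : ∀ u v, u ≠ v → H u v = 1 +
      ∑ w, ((if G.Adj u w then c s(u, w) else 0) /
        ∑ x, (if G.Adj u x then c s(u, x) else 0)) * H w v)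
    (T : Finset (Sym2 V)) (hTsub : ↑T ⊆ G.edgeSet)
    (hTtree : (SimpleGraph.fromEdgeSet (↑T : Set (Sym2 V))).IsTree) :
    ∃ σ : Fin (Fintype.card V) ≃ V,
      cycSum H σ ≤ 2 * (∑ e ∈ G.edgeFinset, c e) * ∑ e ∈ T, R e := by
  classical
  have hd := G.conductance_nonneg fun e he => (hc e he).le
  have hconn := hG.reflTransGen_conductance_pos hc
  have hL : ∀ v w, w ≠ v → laplacian (G.conductance c) (fun x => H x v) w =
      ∑ x, G.conductance c w x := fun _ _ => laplacian_hitting hd hH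
  obtain ⟨l, hl, hall, hcost⟩ := exists_tour_le hH0 (hitting_nonneg hd hconn hH0 hL)
    (hitting_triangle hd hconn hH0 hL) hTtree.connected
  obtain ⟨σ, hσ⟩ := exists_cycSum_eq_tourCost hl hall H
  have hcommute : ∀ e ∈ T, commuteTime H e = 2 * (∑ e ∈ G.edgeFinset, c e) * R e := by
    intro e he
    induction e using Sym2.ind with
    | _ u v =>
      have huv := G.mem_edgeSet.1 (hTsub he)
      rw [commuteTime_eq_mul_of_isEffRes hd SimpleGraph.conductance_comm hconn hH0 hL huv.ne
        (hR u v huv), G.sum_sum_conductance]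
  refine ⟨σ, ?_⟩
  rw [hσ, mul_sum]
  exact hcost.trans_eq (sum_congr rfl hcommute)

/-- For a connected graph `G` with conductance function `c` (positive on edges) and any
spanning tree `T` of `G`, the cyclic cover time of the associated random walk is at most
`2 (∑_{e ∈ E} c(e)) (∑_{e ∈ T} R(e))`, where `R(e)` is the effective resistance of edge `e`
and `H` is the hitting-time function of the walk with transitions proportional to the
conductances. -/
theorem cyclic_cover_time_le_conductance_mul_tree_resistance
    {V : Type*} [Fintype V] [DecidableEq V]
    (G : SimpleGraph V) [DecidableRel G.Adj] (hG : G.Connected)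
    (c : Sym2 V → ℝ) (hc : ∀ e ∈ G.edgeSet, 0 < c e)
    (R : Sym2 V → ℝ)
    (hR : ∀ u v, G.Adj u v →
      IsEffRes (fun a b => if G.Adj a b then c s(a, b) else 0) u v (R s(u, v)))
    (H : V → V → ℝ) (hH0 : ∀ v, H v v = 0)
    (hH : ∀ u v, u ≠ v → H u v = 1 +
      ∑ w, ((if G.Adj u w then c s(u, w) else 0) /
        ∑ x, (if G.Adj u x then c s(u, x) else 0)) * H w v)
    (T : Finset (Sym2 V)) (hTsub : ↑T ⊆ G.edgeSet)
    (hTtree : (SimpleGraph.fromEdgeSet (↑T : Set (Sym2 V))).IsTree) :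
    ∃ σ : Fin (Fintype.card V) ≃ V,
      cycSum H σ ≤ 2 * (∑ e ∈ G.edgeFinset, c e) * ∑ e ∈ T, R e :=
  cyclic_cover_time_le_conductance_mul_tree_resistance_general G hG c hc R hR H hH0 hH T hTsub
    hTtree
end
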